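/- Let ℓ ≥ 1 and k ≥ 1 be integers, and let ψ be any proper 3-coloring of the subgraph of T(u,v,k,ℓ) induced by the vertex set V_ℓ. Then the number of proper 3-colorings of T(u,v,k,ℓ) whose restriction to V_ℓ equals ψ is at most 2^(2^(k+ℓ) + 3^ℓ). -/

import Mathlib

/-- The base relation for the graph `P(u,v,b)`: vertices are `Sum.inl 0 = u`,
`Sum.inl 1 = v`, and `Sum.inr i = v_{i+1}` (0-indexed path vertices).
Edges: consecutive path vertices, `u` to odd-numbered path vertices `v₁, v₃, …`
(even 0-based index), and `v` to even-numbered ones `v₂, v₄, …`. -/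
def PAdj (b : ℕ) : (Fin 2 ⊕ Fin b) → (Fin 2 ⊕ Fin b) → Prop
  | Sum.inr i, Sum.inr j => (j : ℕ) = (i : ℕ) + 1
  | Sum.inl x, Sum.inr i => (x : ℕ) = (i : ℕ) % 2
  | _, _ => False

/-- The graph `P(u,v,b)`. -/
def Pgraph (b : ℕ) : SimpleGraph (Fin 2 ⊕ Fin b) := SimpleGraph.fromRel (PAdj b)

/-- The set of proper 3-colorings of a graph `G`. -/
def properColorings {V : Type*} (G : SimpleGraph V) : Set (V → Fin 3) :=
  {ψ | ∀ a b, G.Adj a b → ψ a ≠ ψ b}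

/-- The type of "inner" vertices of `T(u,v,k,ℓ)` (all vertices except the two
special vertices `u, v`). At level `0` these are the `2^k` path vertices of
`P(u,v,2^k)`; at level `ℓ+1` they are the five path vertices `v₁,…,v₅` of the
base copy of `P(u,v,5)` together with the inner vertices of the three glued
copies of `T(·,·,k,ℓ)`. -/
def TInner (k : ℕ) : ℕ → Type
  | 0 => Fin (2 ^ k)
  | ℓ + 1 => Fin 5 ⊕ (Fin 3 × TInner k ℓ)

/-- The vertex type of `T(u,v,k,ℓ)`: the special vertices `u = Sum.inl 0`,
`v = Sum.inl 1` together with the inner vertices. -/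
abbrev TVert (k ℓ : ℕ) : Type := Fin 2 ⊕ TInner k ℓ

/-- The pair of path vertices of `P(u,v,5)` onto which the `c`-th copy of
`T(·,·,k,ℓ-1)` is glued: `(v₁,v₃)` for `c = 0`, `(v₂,v₄)` for `c = 1`,
`(v₃,v₅)` for `c = 2` (0-indexed). -/
def gluePair (c : Fin 3) : Fin 5 × Fin 5 :=
  (⟨c.val, by omega⟩, ⟨c.val + 2, by have := c.isLt; omega⟩)

/-- The embedding of the `c`-th copy of `T(·,·,k,ℓ)` into `T(u,v,k,ℓ+1)`:
its special vertices are identified with the glue pair, and its inner vertices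
are tagged with `c`. -/
def embedT (k ℓ : ℕ) (c : Fin 3) : TVert k ℓ → TVert k (ℓ + 1)
  | Sum.inl x => if x = 0 then Sum.inr (Sum.inl (gluePair c).1)
                 else Sum.inr (Sum.inl (gluePair c).2)
  | Sum.inr w => Sum.inr (Sum.inr (c, w))

/-- The embedding of the base copy of `P(u,v,5)` into `T(u,v,k,ℓ+1)`. -/
def embedP (k ℓ : ℕ) : (Fin 2 ⊕ Fin 5) → TVert k (ℓ + 1)
  | Sum.inl x => Sum.inl x
  | Sum.inr y => Sum.inr (Sum.inl y)

/-- The graph `T(u,v,k,ℓ)`, defined recursively: `T(u,v,k,0) = P(u,v,2^k)`, and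
`T(u,v,k,ℓ+1)` is obtained from `P(u,v,5)` by gluing three copies of
`T(·,·,k,ℓ)` onto the pairs `(v₁,v₃)`, `(v₂,v₄)`, `(v₃,v₅)`. -/
def TGraph (k : ℕ) : (ℓ : ℕ) → SimpleGraph (TVert k ℓ)
  | 0 => Pgraph (2 ^ k)
  | ℓ + 1 => SimpleGraph.fromRel (fun a b =>
      (∃ x y, (Pgraph 5).Adj x y ∧ a = embedP k ℓ x ∧ b = embedP k ℓ y) ∨
      (∃ c x y, (TGraph k ℓ).Adj x y ∧ a = embedT k ℓ c x ∧ b = embedT k ℓ c y))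

/-- The set `V_ℓ` of vertices of `T(u,v,k,ℓ)` not belonging to the interior of any
leaf copy of `P(x,y,2^k)`: at level `0` it consists of the two special vertices, and
at level `ℓ+1` it consists of the vertices of the base copy of `P(u,v,5)` together
with the images of the sets `V_ℓ` of the three glued copies. -/
def Vset (k : ℕ) : (ℓ : ℕ) → Set (TVert k ℓ)
  | 0 => {Sum.inl 0, Sum.inl 1}
  | ℓ + 1 => {a | (∃ x, a = embedP k ℓ x) ∨ ∃ c x, x ∈ Vset k ℓ ∧ a = embedT k ℓ c x}

/-!
With the colours on `V_{ℓ+1}` fixed, a colouring of `T(u,v,k,ℓ+1)` is determined by its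
restrictions to the three glued copies of `T(·,·,k,ℓ)`, so the number of extensions is at most
the product of the numbers for the copies. In a proper 3-colouring of `P(u,v,5)` one of the
glued pairs `(v₁,v₃)`, `(v₂,v₄)`, `(v₃,v₅)` is monochromatic, and all three are if `u` and `v`
have the same colour. A copy whose special vertices have the same colour has at most `2^(3^ℓ)`
extensions (at a leaf the path must alternate between the two other colours, leaving two
choices), while any copy has at most `2^(2^(k+ℓ) + 3^ℓ)` (each leaf path vertex avoids one
colour). An induction on `ℓ` carrying both bounds gives the theorem, since
`3^ℓ + 2 (2^(k+ℓ) + 3^ℓ) = 2^(k+ℓ+1) + 3^(ℓ+1)`.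
-/

lemma fin3_eq_of_ne_of_ne {a b x y : Fin 3} (hab : a ≠ b) (hxa : x ≠ a) (hxb : x ≠ b)
    (hya : y ≠ a) (hyb : y ≠ b) : x = y := by
  revert a b x y; decide

section Pgraph

variable {b : ℕ}

lemma Pgraph_adj_inl_inr {x : Fin 2} {i : Fin b} (h : (x : ℕ) = i % 2) :
    (Pgraph b).Adj (.inl x) (.inr i) :=
  ⟨Sum.inl_ne_inr, .inl h⟩

lemma Pgraph_adj_inr_inr {i j : Fin b} (h : (j : ℕ) = i + 1) :
    (Pgraph b).Adj (.inr i) (.inr j) :=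
  ⟨by simp only [ne_eq, Sum.inr.injEq, Fin.ext_iff]; omega, .inl h⟩

lemma Pgraph_color_inr_ne {φ : Fin 2 ⊕ Fin b → Fin 3} (hφ : φ ∈ properColorings (Pgraph b))
    (i : Fin b) : φ (.inr i) ≠ φ (.inl ⟨i % 2, by omega⟩) :=
  (hφ _ _ (Pgraph_adj_inl_inr rfl)).symm

theorem card_Pgraph_colorings_le (c : Fin 2 → Fin 3) :
    Nat.card {φ | φ ∈ properColorings (Pgraph b) ∧ ∀ x, φ (.inl x) = c x} ≤ 2 ^ b := by
  let f (φ : {φ | φ ∈ properColorings (Pgraph b) ∧ ∀ x, φ (.inl x) = c x})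
      (i : Fin b) : {d : Fin 3 // d ≠ c ⟨i % 2, by omega⟩} :=
    ⟨φ.1 (.inr i), φ.2.2 _ ▸ Pgraph_color_inr_ne φ.2.1 i⟩
  have hf : f.Injective := by
    intro φ φ' h
    ext1; funext x
    rcases x with x | i
    · rw [φ.2.2, φ'.2.2]
    · exact congrArg Subtype.val (congrFun h i)
  calc _ ≤ Nat.card (∀ i : Fin b, {d : Fin 3 // d ≠ c ⟨i % 2, by omega⟩}) :=
        Nat.card_le_card_of_injective f hf
    _ = 2 ^ b := by simp

theorem card_Pgraph_colorings_le_two (hb : 0 < b) (c : Fin 2 → Fin 3) (hc : c 0 = c 1) :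
    Nat.card {φ | φ ∈ properColorings (Pgraph b) ∧ ∀ x, φ (.inl x) = c x} ≤ 2 := by
  have avoid (φ : {φ | φ ∈ properColorings (Pgraph b) ∧ ∀ x, φ (.inl x) = c x}) (i : Fin b) :
      φ.1 (.inr i) ≠ c 0 := by
    have hci : c ⟨i % 2, by omega⟩ = c 0 := by
      rcases Nat.mod_two_eq_zero_or_one i with h | h
      · exact congrArg c (Fin.ext h)
      · exact (congrArg c (Fin.ext h)).trans hc.symm
    exact hci ▸ φ.2.2 _ ▸ Pgraph_color_inr_ne φ.2.1 i
  let f (φ : {φ | φ ∈ properColorings (Pgraph b) ∧ ∀ x, φ (.inl x) = c x}) :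
      {d : Fin 3 // d ≠ c 0} :=
    ⟨φ.1 (.inr ⟨0, hb⟩), avoid φ _⟩
  have hf : f.Injective := by
    intro φ φ' h
    have along : ∀ n (hn : n < b), φ.1 (.inr ⟨n, hn⟩) = φ'.1 (.inr ⟨n, hn⟩) := by
      intro n
      induction n with
      | zero => exact fun _ => congrArg Subtype.val h
      | succ m ih =>
        intro hn
        have hadj := Pgraph_adj_inr_inr (i := ⟨m, by omega⟩) (j := ⟨m + 1, hn⟩) rfl
        exact fin3_eq_of_ne_of_ne (avoid φ _).symm (avoid φ _) (φ.2.1 _ _ hadj).symm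
          (avoid φ' _) (ih (by omega) ▸ (φ'.2.1 _ _ hadj).symm)
    ext1; funext x
    rcases x with x | i
    · rw [φ.2.2, φ'.2.2]
    · exact along i i.isLt
  calc _ ≤ Nat.card {d : Fin 3 // d ≠ c 0} := Nat.card_le_card_of_injective f hf
    _ = 2 := by simp

theorem exists_gluePair_color_eq {w : Fin 2 ⊕ Fin 5 → Fin 3}
    (hw : w ∈ properColorings (Pgraph 5)) :
    ∃ c, w (.inr (gluePair c).1) = w (.inr (gluePair c).2) := by
  have key : ∀ a b w₀ w₁ w₂ w₃ w₄ : Fin 3, w₀ ≠ a → w₁ ≠ b → w₂ ≠ a → w₃ ≠ b → w₄ ≠ a →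
      w₀ ≠ w₁ → w₁ ≠ w₂ → w₂ ≠ w₃ → w₃ ≠ w₄ → w₀ = w₂ ∨ w₁ = w₃ ∨ w₂ = w₄ := by
    decide
  have hu := Pgraph_color_inr_ne hw
  have hpath (i j : Fin 5) (hij : (j : ℕ) = i + 1) : w (.inr i) ≠ w (.inr j) :=
    hw _ _ (Pgraph_adj_inr_inr hij)
  rcases key _ _ _ _ _ _ _ (hu 0) (hu 1) (hu 2) (hu 3) (hu 4)
    (hpath 0 1 rfl) (hpath 1 2 rfl) (hpath 2 3 rfl) (hpath 3 4 rfl) with h | h | h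
  exacts [⟨0, h⟩, ⟨1, h⟩, ⟨2, h⟩]

theorem gluePair_color_eq_of_eq {w : Fin 2 ⊕ Fin 5 → Fin 3}
    (hw : w ∈ properColorings (Pgraph 5)) (huv : w (.inl 0) = w (.inl 1)) (c : Fin 3) :
    w (.inr (gluePair c).1) = w (.inr (gluePair c).2) := by
  have hu (i : Fin 5) : w (.inr i) ≠ w (.inl 0) := by
    rcases Nat.mod_two_eq_zero_or_one i with hi | hi
    · exact (hw _ _ (Pgraph_adj_inl_inr (x := 0) (by rw [hi]; rfl))).symm
    · exact huv ▸ (hw _ _ (Pgraph_adj_inl_inr (x := 1) (by rw [hi]; rfl))).symm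
  have hpath (i j : Fin 5) (hij : (j : ℕ) = i + 1) : w (.inr i) ≠ w (.inr j) :=
    hw _ _ (Pgraph_adj_inr_inr hij)
  have hc := c.isLt
  exact fin3_eq_of_ne_of_ne (hu _).symm (hu _) (hpath _ ⟨c + 1, by omega⟩ rfl) (hu _)
    (hpath ⟨c + 1, by omega⟩ _ rfl).symm

end Pgraph

def properExtensions {V : Type*} (G : SimpleGraph V) (S : Set V) (ψ : S → Fin 3) :
    Set (V → Fin 3) :=
  {φ | φ ∈ properColorings G ∧ ∀ x : S, φ x = ψ x}

lemma properExtensions.eqOn {V : Type*} {G : SimpleGraph V} {S : Set V} {ψ : S → Fin 3}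
    {φ φ' : V → Fin 3} (hφ : φ ∈ properExtensions G S ψ) (hφ' : φ' ∈ properExtensions G S ψ) :
    S.EqOn φ φ' :=
  fun x hx => (hφ.2 ⟨x, hx⟩).trans (hφ'.2 ⟨x, hx⟩).symm

section TGraph

variable {k ℓ : ℕ}

instance TInner.finite (k : ℕ) : ∀ ℓ, Finite (TInner k ℓ)
  | 0 => inferInstanceAs (Finite (Fin _))
  | ℓ + 1 => have := TInner.finite k ℓ; inferInstanceAs (Finite (_ ⊕ _))

lemma inl_mem_Vset : ∀ {ℓ : ℕ} (x : Fin 2), (Sum.inl x : TVert k ℓ) ∈ Vset k ℓ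
  | 0, x => by fin_cases x <;> simp [Vset]
  | _ + 1, x => .inl ⟨.inl x, rfl⟩

lemma embedP_mem_Vset (x : Fin 2 ⊕ Fin 5) : embedP k ℓ x ∈ Vset k (ℓ + 1) :=
  .inl ⟨x, rfl⟩

lemma embedT_mem_Vset (c : Fin 3) {x : TVert k ℓ} (hx : x ∈ Vset k ℓ) :
    embedT k ℓ c x ∈ Vset k (ℓ + 1) :=
  .inr ⟨c, x, hx, rfl⟩

lemma embedP_injective : Function.Injective (embedP k ℓ) := by
  rintro (x | x) (y | y) h <;> cases h <;> rfl

lemma embedT_injective (c : Fin 3) : Function.Injective (embedT k ℓ c) := by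
  rintro (x | x) (y | y) h
  · fin_cases x <;> fin_cases y <;> simp only [embedT] at h ⊢ <;> try rfl
    all_goals
      have := congrArg Fin.val (Sum.inl_injective (Sum.inr_injective h))
      simp [gluePair] at this
  · fin_cases x <;> cases h
  · fin_cases y <;> cases h
  · cases h; rfl

lemma TGraph_adj_embedP {x y : Fin 2 ⊕ Fin 5} (h : (Pgraph 5).Adj x y) :
    (TGraph k (ℓ + 1)).Adj (embedP k ℓ x) (embedP k ℓ y) :=
  ⟨embedP_injective.ne h.ne, .inl (.inl ⟨x, y, h, rfl, rfl⟩)⟩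

lemma TGraph_adj_embedT (c : Fin 3) {x y : TVert k ℓ} (h : (TGraph k ℓ).Adj x y) :
    (TGraph k (ℓ + 1)).Adj (embedT k ℓ c x) (embedT k ℓ c y) :=
  ⟨(embedT_injective c).ne h.ne, .inl (.inr ⟨c, x, y, h, rfl, rfl⟩)⟩

end TGraph

section Recursion

variable {k ℓ : ℕ}

def copyColoring (ψ : Vset k (ℓ + 1) → Fin 3) (c : Fin 3) : Vset k ℓ → Fin 3 :=
  fun x => ψ ⟨embedT k ℓ c x, embedT_mem_Vset c x.2⟩

def baseColoring (ψ : Vset k (ℓ + 1) → Fin 3) : Fin 2 ⊕ Fin 5 → Fin 3 :=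
  fun x => ψ ⟨embedP k ℓ x, embedP_mem_Vset x⟩

variable {ψ : Vset k (ℓ + 1) → Fin 3}

lemma copyColoring_mem_properColorings
    (hψ : ψ ∈ properColorings ((TGraph k (ℓ + 1)).induce (Vset k (ℓ + 1)))) (c : Fin 3) :
    copyColoring ψ c ∈ properColorings ((TGraph k ℓ).induce (Vset k ℓ)) :=
  fun _ _ h => hψ _ _ (TGraph_adj_embedT c h)

lemma baseColoring_mem_properColorings
    (hψ : ψ ∈ properColorings ((TGraph k (ℓ + 1)).induce (Vset k (ℓ + 1)))) :
    baseColoring ψ ∈ properColorings (Pgraph 5) :=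
  fun _ _ h => hψ _ _ (TGraph_adj_embedP h)

lemma copyColoring_inl_eq_iff (c : Fin 3) :
    copyColoring ψ c ⟨.inl 0, inl_mem_Vset 0⟩ = copyColoring ψ c ⟨.inl 1, inl_mem_Vset 1⟩ ↔
      baseColoring ψ (.inr (gluePair c).1) = baseColoring ψ (.inr (gluePair c).2) :=
  Iff.rfl

lemma comp_embedT_mem_properExtensions {φ : TVert k (ℓ + 1) → Fin 3}
    (hφ : φ ∈ properExtensions (TGraph k (ℓ + 1)) (Vset k (ℓ + 1)) ψ) (c : Fin 3) :
    φ ∘ embedT k ℓ c ∈ properExtensions (TGraph k ℓ) (Vset k ℓ) (copyColoring ψ c) :=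
  ⟨fun _ _ h => hφ.1 _ _ (TGraph_adj_embedT c h), fun x => hφ.2 ⟨_, embedT_mem_Vset c x.2⟩⟩

theorem card_properExtensions_succ_le :
    Nat.card (properExtensions (TGraph k (ℓ + 1)) (Vset k (ℓ + 1)) ψ) ≤
      ∏ c, Nat.card (properExtensions (TGraph k ℓ) (Vset k ℓ) (copyColoring ψ c)) := by
  let f (φ : properExtensions (TGraph k (ℓ + 1)) (Vset k (ℓ + 1)) ψ) (c : Fin 3) :
      properExtensions (TGraph k ℓ) (Vset k ℓ) (copyColoring ψ c) :=
    ⟨φ.1 ∘ embedT k ℓ c, comp_embedT_mem_properExtensions φ.2 c⟩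
  have hf : f.Injective := by
    intro φ φ' h
    ext1; funext v
    rcases v with x | j | ⟨c, w⟩
    · exact properExtensions.eqOn φ.2 φ'.2 (inl_mem_Vset x)
    · exact properExtensions.eqOn φ.2 φ'.2 (embedP_mem_Vset (.inr j))
    · exact congrFun (congrArg Subtype.val (congrFun h c)) (.inr w)
  calc _ ≤ Nat.card (∀ c, properExtensions (TGraph k ℓ) (Vset k ℓ) (copyColoring ψ c)) :=
        Nat.card_le_card_of_injective f hf
    _ = _ := Nat.card_pi

end Recursion

section Bounds

variable {k : ℕ}

lemma properExtensions_zero_subset (ψ : Vset k 0 → Fin 3) :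
    properExtensions (TGraph k 0) (Vset k 0) ψ ⊆
      {φ | φ ∈ properColorings (Pgraph (2 ^ k)) ∧
        ∀ x, φ (.inl x) = ψ ⟨.inl x, inl_mem_Vset x⟩} :=
  fun _ hφ => ⟨hφ.1, fun x => hφ.2 ⟨_, inl_mem_Vset x⟩⟩

theorem card_properExtensions_le_of_eq : ∀ (ℓ : ℕ) (ψ : Vset k ℓ → Fin 3),
    ψ ∈ properColorings ((TGraph k ℓ).induce (Vset k ℓ)) →
    ψ ⟨.inl 0, inl_mem_Vset 0⟩ = ψ ⟨.inl 1, inl_mem_Vset 1⟩ →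
    Nat.card (properExtensions (TGraph k ℓ) (Vset k ℓ) ψ) ≤ 2 ^ 3 ^ ℓ
  | 0, ψ, _, huv => by
    simpa using (Nat.card_mono (Set.toFinite _) (properExtensions_zero_subset ψ)).trans
      (card_Pgraph_colorings_le_two (Nat.two_pow_pos k) _ huv)
  | ℓ + 1, ψ, hψ, huv => by
    have hcopy (c : Fin 3) :
        Nat.card (properExtensions (TGraph k ℓ) (Vset k ℓ) (copyColoring ψ c)) ≤ 2 ^ 3 ^ ℓ :=
      card_properExtensions_le_of_eq ℓ _ (copyColoring_mem_properColorings hψ c)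
        ((copyColoring_inl_eq_iff c).2
          (gluePair_color_eq_of_eq (baseColoring_mem_properColorings hψ) huv c))
    calc _ ≤ _ := card_properExtensions_succ_le
      _ ≤ ∏ _c : Fin 3, 2 ^ 3 ^ ℓ := Finset.prod_le_prod' fun c _ => hcopy c
      _ = 2 ^ 3 ^ (ℓ + 1) := by
          rw [Finset.prod_const, Finset.card_univ, Fintype.card_fin, ← pow_mul, ← pow_succ]

theorem card_properExtensions_le : ∀ (ℓ : ℕ) (ψ : Vset k ℓ → Fin 3),
    ψ ∈ properColorings ((TGraph k ℓ).induce (Vset k ℓ)) →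
    Nat.card (properExtensions (TGraph k ℓ) (Vset k ℓ) ψ) ≤ 2 ^ (2 ^ (k + ℓ) + 3 ^ ℓ)
  | 0, ψ, _ => by
    calc _ ≤ 2 ^ 2 ^ k := (Nat.card_mono (Set.toFinite _) (properExtensions_zero_subset ψ)).trans
          (card_Pgraph_colorings_le _)
      _ ≤ _ := Nat.pow_le_pow_right two_pos (by simp)
  | ℓ + 1, ψ, hψ => by
    obtain ⟨c₀, hc₀⟩ := exists_gluePair_color_eq (baseColoring_mem_properColorings hψ)
    set N := fun c => Nat.card (properExtensions (TGraph k ℓ) (Vset k ℓ) (copyColoring ψ c))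
    have hN (c : Fin 3) : N c ≤ 2 ^ (2 ^ (k + ℓ) + 3 ^ ℓ) :=
      card_properExtensions_le ℓ _ (copyColoring_mem_properColorings hψ c)
    have hN₀ : N c₀ ≤ 2 ^ 3 ^ ℓ :=
      card_properExtensions_le_of_eq ℓ _ (copyColoring_mem_properColorings hψ c₀)
        ((copyColoring_inl_eq_iff c₀).2 hc₀)
    have hrest : ∏ c ∈ Finset.univ.erase c₀, N c ≤ (2 ^ (2 ^ (k + ℓ) + 3 ^ ℓ)) ^ 2 := by
      simpa [Finset.card_erase_of_mem] using
        Finset.prod_le_pow_card (Finset.univ.erase c₀) N _ fun c _ => hN c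
    calc _ ≤ ∏ c, N c := card_properExtensions_succ_le
      _ = N c₀ * ∏ c ∈ Finset.univ.erase c₀, N c :=
          (Finset.mul_prod_erase _ _ (Finset.mem_univ c₀)).symm
      _ ≤ 2 ^ 3 ^ ℓ * (2 ^ (2 ^ (k + ℓ) + 3 ^ ℓ)) ^ 2 := Nat.mul_le_mul hN₀ hrest
      _ = 2 ^ (2 ^ (k + (ℓ + 1)) + 3 ^ (ℓ + 1)) := by
          rw [← pow_mul, ← pow_add]; ring_nf

end Bounds

theorem stmt9_general (k ℓ : ℕ)
    (ψ : (Vset k ℓ) → Fin 3)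
    (hψ : ψ ∈ properColorings ((TGraph k ℓ).induce (Vset k ℓ))) :
    Nat.card {φ : TVert k ℓ → Fin 3 // φ ∈ properColorings (TGraph k ℓ) ∧
      ∀ x : (Vset k ℓ), φ x = ψ x} ≤ 2 ^ (2 ^ (k + ℓ) + 3 ^ ℓ) :=
  card_properExtensions_le ℓ ψ hψ

/-- Lemma 3: for `ℓ, k ≥ 1`, any proper 3-coloring `ψ` of the subgraph of
`T(u,v,k,ℓ)` induced by `V_ℓ` extends to at most `2^(2^(k+ℓ) + 3^ℓ)` proper
3-colorings of `T(u,v,k,ℓ)`. -/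
theorem stmt9 (k ℓ : ℕ) (hk : 1 ≤ k) (hℓ : 1 ≤ ℓ)
    (ψ : (Vset k ℓ) → Fin 3)
    (hψ : ψ ∈ properColorings ((TGraph k ℓ).induce (Vset k ℓ))) :
    Nat.card {φ : TVert k ℓ → Fin 3 // φ ∈ properColorings (TGraph k ℓ) ∧
      ∀ x : (Vset k ℓ), φ x = ψ x} ≤ 2 ^ (2 ^ (k + ℓ) + 3 ^ ℓ) :=
  stmt9_general k ℓ ψ hψ
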